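/- Proposition 1(ii) (sliding surface of a union). Let E be a real normed vector space, let f_a, f_b : E → E be two vector fields, and let c₁, c₂ : E → ℝ be continuous and differentiable functions. Set Aᵢ = {x | cᵢ(x) ≤ 0} for i = 1, 2, and assume that frontier(Aᵢ) = {x | cᵢ(x) = 0} for i = 1, 2 and that frontier(A₁) ∩ frontier(A₂) = ∅. Let c(x) = min(c₁(x), c₂(x)), so that A₁ ∪ A₂ = {x | c(x) ≤ 0}. Define S(Aᵢ) = frontier(Aᵢ) ∩ {x | Dcᵢ(x)(f_a(x)) ≥ 0 and Dcᵢ(x)(f_b(x)) ≤ 0}, and define S(A₁ ∪ A₂) = frontier(A₁ ∪ A₂) ∩ {x | Dc(x)(f_a(x)) ≥ 0 and Dc(x)(f_b(x)) ≤ 0}, where D denotes the Fréchet derivative. Then S(A₁ ∪ A₂) = (S(A₁) ∩ closure(A₂ᶜ)) ∪ (S(A₂) ∩ closure(A₁ᶜ)). -/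

import Mathlib

/-!
Away from the closure of `A₂` the union `A₁ ∪ A₂` coincides with `A₁`, and since the two frontiers
are disjoint, every point of `frontier A₁ ∩ closure A₂ᶜ` lies away from `closure A₂`. So the
frontier of the union splits into these two pieces, and near a point of the first one we have
`c₁ < c₂`, hence `min c₁ c₂ = c₁` on a neighbourhood and the two Fréchet derivatives agree; the
second piece is symmetric.
-/

open Set Filter Topology

section Frontier

variable {X : Type*} [TopologicalSpace X] {s t : Set X}

theorem frontier_sdiff_closure_subset_frontier_union :
    frontier s \ closure t ⊆ frontier (s ∪ t) := by
  intro x hx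
  have hU : IsOpen (closure t)ᶜ := isClosed_closure.isOpen_compl
  have hst : (s ∪ t) ∩ (closure t)ᶜ = s ∩ (closure t)ᶜ := by
    rw [union_inter_distrib_right, union_eq_left]
    exact fun y hy => absurd (subset_closure hy.1) hy.2
  have hx' : x ∈ frontier (s ∪ t) ∩ (closure t)ᶜ := by
    rw [← frontier_inter_open_inter hU, hst, frontier_inter_open_inter hU]
    exact hx
  exact hx'.1

theorem frontier_inter_closure_compl_of_disjoint (h : Disjoint (frontier s) (frontier t)) :
    frontier s ∩ closure tᶜ = frontier s \ closure t := by
  ext x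
  simp only [mem_inter_iff, Set.mem_sdiff, closure_compl, mem_compl_iff,
    closure_eq_interior_union_frontier t, mem_union, not_or]
  exact and_congr_right fun hx => (and_iff_left (h.notMem_of_mem_left hx)).symm

theorem frontier_union_of_disjoint_frontier (h : Disjoint (frontier s) (frontier t)) :
    frontier (s ∪ t) = frontier s \ closure t ∪ frontier t \ closure s := by
  refine subset_antisymm ?_ (union_subset frontier_sdiff_closure_subset_frontier_union ?_)
  · rw [← frontier_inter_closure_compl_of_disjoint h,
      ← frontier_inter_closure_compl_of_disjoint h.symm, inter_comm (frontier t)]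
    exact frontier_union_subset s t
  · rw [union_comm]
    exact frontier_sdiff_closure_subset_frontier_union

theorem lt_of_mem_frontier_sdiff_closure {f g : X → ℝ} (hf : Continuous f) {x : X}
    (hx : x ∈ frontier {y | f y ≤ 0} \ closure {y | g y ≤ 0}) : f x < g x := by
  have hfx : f x = 0 := frontier_le_subset_eq hf continuous_const hx.1
  have hgx : 0 < g x := not_le.1 fun hg => hx.2 (subset_closure hg)
  exact hfx ▸ hgx

end Frontier

section Min

variable {E : Type*} [NormedAddCommGroup E] [NormedSpace ℝ E] {f g : E → ℝ} {x : E}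

theorem fderiv_min_eq_left (hf : ContinuousAt f x) (hg : ContinuousAt g x) (h : f x < g x) :
    fderiv ℝ (fun y => min (f y) (g y)) x = fderiv ℝ f x :=
  EventuallyEq.fderiv_eq <| (hf.eventually_lt hg h).mono fun _ hy => min_eq_left hy.le

theorem fderiv_min_eq_right (hf : ContinuousAt f x) (hg : ContinuousAt g x) (h : g x < f x) :
    fderiv ℝ (fun y => min (f y) (g y)) x = fderiv ℝ g x := by
  simp only [min_comm (f _)]
  exact fderiv_min_eq_left hg hf h

end Min

theorem sliding_surface_union_general {E : Type*} [NormedAddCommGroup E] [NormedSpace ℝ E]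
    (fa fb : E → E) (c₁ c₂ : E → ℝ)
    (hc₁ : Continuous c₁) (hc₂ : Continuous c₂)
    (A₁ A₂ : Set E) (hA₁ : A₁ = {x | c₁ x ≤ 0}) (hA₂ : A₂ = {x | c₂ x ≤ 0})
    (hdisj : frontier A₁ ∩ frontier A₂ = ∅)
    (c : E → ℝ) (hc : c = fun x => min (c₁ x) (c₂ x)) :
    frontier (A₁ ∪ A₂) ∩
        {x | 0 ≤ fderiv ℝ c x (fa x) ∧ fderiv ℝ c x (fb x) ≤ 0} =
      (frontier A₁ ∩
          {x | 0 ≤ fderiv ℝ c₁ x (fa x) ∧ fderiv ℝ c₁ x (fb x) ≤ 0} ∩ closure A₂ᶜ) ∪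
        (frontier A₂ ∩
          {x | 0 ≤ fderiv ℝ c₂ x (fa x) ∧ fderiv ℝ c₂ x (fb x) ≤ 0} ∩ closure A₁ᶜ) := by
  subst hA₁ hA₂ hc
  have hdisj' := disjoint_iff_inter_eq_empty.2 hdisj
  rw [frontier_union_of_disjoint_frontier hdisj', union_inter_distrib_right,
    inter_right_comm (frontier {x | c₁ x ≤ 0}), inter_right_comm (frontier {x | c₂ x ≤ 0}),
    frontier_inter_closure_compl_of_disjoint hdisj',
    frontier_inter_closure_compl_of_disjoint hdisj'.symm]
  congr 1 <;> ext x <;> simp only [mem_inter_iff, mem_ofPred_eq] <;>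
    refine and_congr_right fun hx => ?_
  · rw [fderiv_min_eq_left hc₁.continuousAt hc₂.continuousAt
      (lt_of_mem_frontier_sdiff_closure hc₁ hx)]
  · rw [fderiv_min_eq_right hc₁.continuousAt hc₂.continuousAt
      (lt_of_mem_frontier_sdiff_closure hc₂ hx)]

theorem sliding_surface_union {E : Type*} [NormedAddCommGroup E] [NormedSpace ℝ E]
    (fa fb : E → E) (c₁ c₂ : E → ℝ)
    (hc₁ : Continuous c₁) (hc₂ : Continuous c₂)
    (hd₁ : Differentiable ℝ c₁) (hd₂ : Differentiable ℝ c₂)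
    (A₁ A₂ : Set E) (hA₁ : A₁ = {x | c₁ x ≤ 0}) (hA₂ : A₂ = {x | c₂ x ≤ 0})
    (hfr₁ : frontier A₁ = {x | c₁ x = 0}) (hfr₂ : frontier A₂ = {x | c₂ x = 0})
    (hdisj : frontier A₁ ∩ frontier A₂ = ∅)
    (c : E → ℝ) (hc : c = fun x => min (c₁ x) (c₂ x)) :
    frontier (A₁ ∪ A₂) ∩
        {x | 0 ≤ fderiv ℝ c x (fa x) ∧ fderiv ℝ c x (fb x) ≤ 0} =
      (frontier A₁ ∩
          {x | 0 ≤ fderiv ℝ c₁ x (fa x) ∧ fderiv ℝ c₁ x (fb x) ≤ 0} ∩ closure A₂ᶜ) ∪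
        (frontier A₂ ∩
          {x | 0 ≤ fderiv ℝ c₂ x (fa x) ∧ fderiv ℝ c₂ x (fb x) ≤ 0} ∩ closure A₁ᶜ) :=
  sliding_surface_union_general fa fb c₁ c₂ hc₁ hc₂ A₁ A₂ hA₁ hA₂ hdisj c hc
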